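/- arXiv:1810.02881 — 2 statements merged into one kernel-verified Lean document; each statement's English description precedes it below -/
import Mathlib

section
/- Let k < p be positive integers, B a k×k skew-symmetric matrix, A a (p−k)×k real matrix, and let X = [[B, −Aᵀ],[A, 0]]. Then I_k + AᵀA − B is invertible, and the blocks of Q = C(X) = (I_p + X)(I_p − X)⁻¹ I_{p×k} are given by Q₁ = (I_k − AᵀA + B)(I_k + AᵀA − B)⁻¹ and Q₂ = 2A(I_k + AᵀA − B)⁻¹, where Q₁ is the top k×k block and Q₂ the bottom (p−k)×k block of Q. -/
open Matrix MeasureTheory Filter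
open scoped Kronecker ENNReal

noncomputable section

/-- The `p × k` matrix whose top `k × k` block is the identity and whose
remaining entries are zero. -/
def Ipk (p k : ℕ) : Matrix (Fin p) (Fin k) ℝ :=
  Matrix.of fun i j => if (i : ℕ) = (j : ℕ) then 1 else 0

/-- The (modified) Cayley transform `C(X) = (I + X)(I - X)⁻¹ I_{p×k}`. -/
def cayley (p k : ℕ) (X : Matrix (Fin p) (Fin p) ℝ) : Matrix (Fin p) (Fin k) ℝ :=
  (1 + X) * (1 - X)⁻¹ * Ipk p k

/-- Top `k × k` block of a `p × k` matrix. -/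
def topBlock {p k : ℕ} (h : k ≤ p) (Q : Matrix (Fin p) (Fin k) ℝ) :
    Matrix (Fin k) (Fin k) ℝ :=
  Q.submatrix (Fin.castLE h) id

/-- Bottom `(p-k) × k` block of a `p × k` matrix. -/
def botBlock {p k : ℕ} (h : k ≤ p) (Q : Matrix (Fin p) (Fin k) ℝ) :
    Matrix (Fin (p - k)) (Fin k) ℝ :=
  Q.submatrix (fun i => ⟨k + i.1, by have := i.isLt; omega⟩) id

/-- The skew-symmetric block matrix `[[B, -Aᵀ], [A, 0]]` as a `p × p` matrix. -/
def blockX {p k : ℕ} (h : k ≤ p) (B : Matrix (Fin k) (Fin k) ℝ)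
    (A : Matrix (Fin (p - k)) (Fin k) ℝ) : Matrix (Fin p) (Fin p) ℝ :=
  (Matrix.fromBlocks B (-Aᵀ) A 0).submatrix
    (fun i => finSumFinEquiv.symm (Fin.cast (by omega) i))
    (fun j => finSumFinEquiv.symm (Fin.cast (by omega) j))

/-- Position of the strictly subdiagonal entry `(i, j)` (`j < i`) of a `k × k`
matrix in the column-major enumeration of the strictly subdiagonal entries. -/
def lowIdx (k i j : ℕ) : ℕ := j * k + i - (j + 1) * (j + 2) / 2

/-- The `k × k` skew-symmetric matrix whose strictly subdiagonal entries, in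
column-major order, are given by `b`. -/
def skewOfVec (k : ℕ) (b : Fin (k * (k - 1) / 2) → ℝ) : Matrix (Fin k) (Fin k) ℝ :=
  Matrix.of fun i j =>
    if (j : ℕ) < (i : ℕ) then
      if h : lowIdx k i j < k * (k - 1) / 2 then b ⟨lowIdx k i j, h⟩ else 0
    else if (i : ℕ) < (j : ℕ) then
      if h : lowIdx k j i < k * (k - 1) / 2 then -b ⟨lowIdx k j i, h⟩ else 0
    else 0

/-- The vector of strictly subdiagonal entries of a `k × k` matrix, in
column-major order. -/
def subdiagVec {k : ℕ} (M : Matrix (Fin k) (Fin k) ℝ) : Fin (k * (k - 1) / 2) → ℝ :=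
  fun t => ∑ i : Fin k, ∑ j : Fin k,
    if (j : ℕ) < (i : ℕ) ∧ lowIdx k (i : ℕ) (j : ℕ) = (t : ℕ) then M i j else 0

/-- Column-major vectorization of an `a × b` matrix, indexed by
(column, row) pairs. -/
def vecP {a b : ℕ} (M : Matrix (Fin a) (Fin b) ℝ) : Fin b × Fin a → ℝ :=
  fun q => M q.2 q.1

/-- The max-norm of a matrix: the maximum of the absolute values of its
entries. -/
def maxNorm {a b : ℕ} (M : Matrix (Fin a) (Fin b) ℝ) : ℝ :=
  ⨆ q : Fin a × Fin b, |M q.1 q.2|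

/-- The Frobenius norm of a matrix. -/
def frobNorm {a b : ℕ} (M : Matrix (Fin a) (Fin b) ℝ) : ℝ :=
  Real.sqrt (∑ i, ∑ j, (M i j) ^ 2)


/-! Both `1 + AᵀA - B` and `1 - X` are a matrix with positive quadratic form minus a
skew-symmetric one, so their quadratic forms are positive and they are invertible.
Since `1 + X = 2 - (1 - X)`, the Cayley transform is `C(X) = 2Y - I_{p×k}`, where `Y`
solves `(1 - X) Y = I_{p×k}`; with `S = 1 + AᵀA - B` a block multiplication shows that
`Y = [S⁻¹; A S⁻¹]`. -/

section Quadratic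

variable {n m R : Type*} [Fintype n] [Field R] [LinearOrder R] [IsStrictOrderedRing R]

theorem Matrix.dotProduct_self_pos {v : n → R} (hv : v ≠ 0) : 0 < v ⬝ᵥ v :=
  lt_of_le_of_ne (Finset.sum_nonneg fun i _ => mul_self_nonneg (v i))
    (Ne.symm (dotProduct_self_eq_zero.not.mpr hv))

theorem Matrix.dotProduct_mulVec_eq_zero_of_transpose_eq_neg {B : Matrix n n R} (hB : Bᵀ = -B)
    (v : n → R) : v ⬝ᵥ B *ᵥ v = 0 := by
  have h : v ⬝ᵥ B *ᵥ v = -(v ⬝ᵥ B *ᵥ v) := by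
    conv_lhs => rw [dotProduct_mulVec, ← mulVec_transpose, hB, neg_mulVec, neg_dotProduct,
      dotProduct_comm]
  linarith

theorem Matrix.dotProduct_mulVec_one_add_transpose_mul_self_pos [DecidableEq n] [Fintype m]
    (A : Matrix m n R) {v : n → R} (hv : v ≠ 0) : 0 < v ⬝ᵥ (1 + Aᵀ * A) *ᵥ v := by
  have hA : v ⬝ᵥ (Aᵀ * A) *ᵥ v = (A *ᵥ v) ⬝ᵥ (A *ᵥ v) := by
    rw [← mulVec_mulVec, dotProduct_mulVec, vecMul_transpose]
  rw [add_mulVec, one_mulVec, dotProduct_add, hA]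
  exact add_pos_of_pos_of_nonneg (dotProduct_self_pos hv)
    (Finset.sum_nonneg fun i _ => mul_self_nonneg _)

theorem Matrix.isUnit_sub_of_transpose_eq_neg [DecidableEq n] {P B : Matrix n n R}
    (hP : ∀ v ≠ 0, 0 < v ⬝ᵥ P *ᵥ v) (hB : Bᵀ = -B) : IsUnit (P - B) := by
  rw [isUnit_iff_isUnit_det, isUnit_iff_ne_zero, Ne, ← exists_mulVec_eq_zero_iff]
  rintro ⟨v, hv, hker⟩
  have hpos := hP v hv
  rw [← sub_add_cancel P B, add_mulVec, dotProduct_add, hker,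
    dotProduct_mulVec_eq_zero_of_transpose_eq_neg hB] at hpos
  simp at hpos

end Quadratic

theorem Matrix.one_add_mul_inv_one_sub_mul_eq {n m R : Type*} [Fintype n] [DecidableEq n]
    [CommRing R] {X : Matrix n n R} {Y J : Matrix n m R} (hX : IsUnit (1 - X))
    (hY : (1 - X) * Y = J) : (1 + X) * (1 - X)⁻¹ * J = (2 : R) • Y - J := by
  have hinv : (1 - X)⁻¹ * J = Y := by
    rw [← hY, nonsing_inv_mul_cancel_left _ _ ((isUnit_iff_isUnit_det _).mp hX)]
  rw [Matrix.mul_assoc, hinv, show 1 + X = (2 : R) • 1 - (1 - X) by module, Matrix.sub_mul, hY,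
    Matrix.smul_mul, Matrix.one_mul]

section Blocks

variable {k l R : Type*} [CommRing R]

theorem Matrix.fromBlocks_transpose_eq_neg {B : Matrix k k R} (hB : Bᵀ = -B)
    (A : Matrix l k R) : (fromBlocks B (-Aᵀ) A 0)ᵀ = -fromBlocks B (-Aᵀ) A 0 := by
  rw [fromBlocks_transpose, fromBlocks_neg, hB]
  simp

theorem Matrix.smul_fromRows_sub_fromRows_one_zero [DecidableEq k] (c : R) (T : Matrix k k R)
    (U : Matrix l k R) :
    c • fromRows T U - fromRows (1 : Matrix k k R) (0 : Matrix l k R)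
      = fromRows (c • T - 1) (c • U) := by
  ext (i | i) j <;> simp

theorem Matrix.cayley_fromBlocks_mul_fromRows_one_zero [Fintype k] [Fintype l] [DecidableEq k]
    [DecidableEq l] {B : Matrix k k R} {A : Matrix l k R} (hS : IsUnit (1 + Aᵀ * A - B))
    (hX : IsUnit (1 - fromBlocks B (-Aᵀ) A 0)) :
    (1 + fromBlocks B (-Aᵀ) A 0) * (1 - fromBlocks B (-Aᵀ) A 0)⁻¹
        * fromRows (1 : Matrix k k R) (0 : Matrix l k R)
      = fromRows ((1 - Aᵀ * A + B) * (1 + Aᵀ * A - B)⁻¹)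
          ((2 : R) • (A * (1 + Aᵀ * A - B)⁻¹)) := by
  set S := 1 + Aᵀ * A - B with hSdef
  have hSS : S * S⁻¹ = 1 := mul_nonsing_inv S ((isUnit_iff_isUnit_det S).mp hS)
  have hsub : 1 - fromBlocks B (-Aᵀ) A 0 = fromBlocks (1 - B) Aᵀ (-A) 1 := by
    ext (i | i) (j | j) <;> simp [one_apply]
  have hY : (1 - fromBlocks B (-Aᵀ) A 0) * fromRows S⁻¹ (A * S⁻¹)
      = fromRows (1 : Matrix k k R) (0 : Matrix l k R) := by
    rw [hsub, fromBlocks_mul_fromRows]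
    congr 1
    · rw [← Matrix.mul_assoc, ← Matrix.add_mul, sub_add_eq_add_sub]
      exact hSS
    · rw [Matrix.one_mul, Matrix.neg_mul, neg_add_cancel]
  refine (one_add_mul_inv_one_sub_mul_eq hX hY).trans ?_
  rw [smul_fromRows_sub_fromRows_one_zero,
    show 1 - Aᵀ * A + B = (2 : R) • 1 - S by rw [hSdef]; module, sub_mul, hSS, smul_mul,
    Matrix.one_mul]

end Blocks

section Reindex

variable {p k : ℕ} (h : k ≤ p)

def finSplit : Fin p ≃ Fin k ⊕ Fin (p - k) :=
  (finCongr (by omega)).trans finSumFinEquiv.symm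

theorem finSplit_castLE (i : Fin k) : finSplit h (Fin.castLE h i) = Sum.inl i := by
  simp only [finSplit, Equiv.trans_apply, Equiv.symm_apply_eq, finSumFinEquiv_apply_left]
  ext
  simp

theorem finSplit_mk_add (i : Fin (p - k)) :
    finSplit h ⟨k + i, by omega⟩ = Sum.inr i := by
  simp only [finSplit, Equiv.trans_apply, Equiv.symm_apply_eq, finSumFinEquiv_apply_right]
  ext
  simp

theorem blockX_eq_submatrix (B : Matrix (Fin k) (Fin k) ℝ)
    (A : Matrix (Fin (p - k)) (Fin k) ℝ) :
    blockX h B A = (fromBlocks B (-Aᵀ) A 0).submatrix (finSplit h) (finSplit h) :=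
  rfl

theorem Ipk_eq_submatrix :
    Ipk p k = (fromRows (1 : Matrix (Fin k) (Fin k) ℝ)
      (0 : Matrix (Fin (p - k)) (Fin k) ℝ)).submatrix (finSplit h) id := by
  ext i j
  obtain ⟨s, rfl⟩ := (finSplit h).symm.surjective i
  rcases s with a | a
  · simp [Ipk, finSplit, one_apply, Fin.ext_iff]
  · have := j.isLt
    simp [Ipk, finSplit]
    omega

theorem cayley_submatrix_finSplit (M : Matrix (Fin k ⊕ Fin (p - k)) (Fin k ⊕ Fin (p - k)) ℝ) :
    cayley p k (M.submatrix (finSplit h) (finSplit h))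
      = ((1 + M) * (1 - M)⁻¹ * fromRows (1 : Matrix (Fin k) (Fin k) ℝ)
          (0 : Matrix (Fin (p - k)) (Fin k) ℝ)).submatrix (finSplit h) id := by
  set e := finSplit h
  have hadd : 1 + M.submatrix e e = (1 + M).submatrix e e := by
    rw [← submatrix_one_equiv e]; rfl
  have hsub : 1 - M.submatrix e e = (1 - M).submatrix e e := by
    rw [← submatrix_one_equiv e]; rfl
  rw [cayley, Ipk_eq_submatrix h, hadd, hsub, inv_submatrix_equiv, submatrix_mul_equiv,
    submatrix_mul_equiv]

theorem topBlock_submatrix_fromRows (T : Matrix (Fin k) (Fin k) ℝ)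
    (U : Matrix (Fin (p - k)) (Fin k) ℝ) :
    topBlock h ((fromRows T U).submatrix (finSplit h) id) = T := by
  ext i j
  simp [topBlock, finSplit_castLE]

theorem botBlock_submatrix_fromRows (T : Matrix (Fin k) (Fin k) ℝ)
    (U : Matrix (Fin (p - k)) (Fin k) ℝ) :
    botBlock h ((fromRows T U).submatrix (finSplit h) id) = U := by
  ext i j
  simp [botBlock, finSplit_mk_add]

end Reindex

theorem cayley_blocks_general (p k : ℕ) (hkp : k < p)
    (B : Matrix (Fin k) (Fin k) ℝ) (hB : Bᵀ = -B)
    (A : Matrix (Fin (p - k)) (Fin k) ℝ) :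
    IsUnit (1 + Aᵀ * A - B) ∧
    topBlock hkp.le (cayley p k (blockX hkp.le B A))
      = (1 - Aᵀ * A + B) * (1 + Aᵀ * A - B)⁻¹ ∧
    botBlock hkp.le (cayley p k (blockX hkp.le B A))
      = (2 : ℝ) • (A * (1 + Aᵀ * A - B)⁻¹) := by
  have hS : IsUnit (1 + Aᵀ * A - B) :=
    isUnit_sub_of_transpose_eq_neg
      (fun _ hv => dotProduct_mulVec_one_add_transpose_mul_self_pos A hv) hB
  have hX : IsUnit (1 - fromBlocks B (-Aᵀ) A 0) :=
    isUnit_sub_of_transpose_eq_neg (fun _ hv => by simpa using dotProduct_self_pos hv)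
      (fromBlocks_transpose_eq_neg hB A)
  rw [blockX_eq_submatrix, cayley_submatrix_finSplit,
    cayley_fromBlocks_mul_fromRows_one_zero hS hX]
  exact ⟨hS, topBlock_submatrix_fromRows _ _ _, botBlock_submatrix_fromRows _ _ _⟩

/-- For `B` skew-symmetric and `A` arbitrary, with `X = [[B, -Aᵀ],[A, 0]]`,
the matrix `I + AᵀA - B` is invertible and the blocks of `Q = C(X)` are
`Q₁ = (I - AᵀA + B)(I + AᵀA - B)⁻¹` and `Q₂ = 2A(I + AᵀA - B)⁻¹`. -/
theorem cayley_blocks (p k : ℕ) (hk : 0 < k) (hkp : k < p)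
    (B : Matrix (Fin k) (Fin k) ℝ) (hB : Bᵀ = -B)
    (A : Matrix (Fin (p - k)) (Fin k) ℝ) :
    IsUnit (1 + Aᵀ * A - B) ∧
    topBlock hkp.le (cayley p k (blockX hkp.le B A))
      = (1 - Aᵀ * A + B) * (1 + Aᵀ * A - B)⁻¹ ∧
    botBlock hkp.le (cayley p k (blockX hkp.le B A))
      = (2 : ℝ) • (A * (1 + Aᵀ * A - B)⁻¹) :=
  cayley_blocks_general p k hkp B hB A

end
end

section
/- Let Q₁ be a real k×k matrix and Q₂ a real (p−k)×k matrix with k‖Q₁‖_max < 1, let F = (I_k − Q₁)(I_k + Q₁)⁻¹ (defined since ‖Q₁‖_F ≤ k‖Q₁‖_max < 1 makes I_k + Q₁ invertible), and let A = ½ Q₂ (I_k + F). Then ‖Q₂ − A‖_max ≤ k ‖Q₂‖_max ‖Q₁‖_max / (1 − k‖Q₁‖_max); in particular ‖Q₂ − A‖_max ≤ k · max(‖Q₁‖_max, ‖Q₂‖_max)² / (1 − k‖Q₁‖_max). -/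
/-! Since `1 + F = 2 (1 + Q₁)⁻¹`, the error is `Q₂ - A = Q₂ M` with `M = Q₁ (1 + Q₁)⁻¹`.
The matrix `M` solves `M = Q₁ - Q₁ M`, so `‖XY‖_max ≤ k ‖X‖_max ‖Y‖_max` gives
`‖M‖_max ≤ ‖Q₁‖_max + k ‖Q₁‖_max ‖M‖_max`, i.e. `‖M‖_max ≤ ‖Q₁‖_max / (1 - k ‖Q₁‖_max)`.
Invertibility of `1 + Q₁` is a Neumann series: the row-sum operator norm of `Q₁` is at most
`k ‖Q₁‖_max < 1`. -/

open Matrix MeasureTheory Filter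
open scoped Kronecker ENNReal

noncomputable section

section MaxNorm

variable {a b c : ℕ}

lemma abs_le_maxNorm (M : Matrix (Fin a) (Fin b) ℝ) (i : Fin a) (j : Fin b) :
    |M i j| ≤ maxNorm M :=
  le_ciSup (f := fun q : Fin a × Fin b => |M q.1 q.2|) (Set.finite_range _).bddAbove (i, j)

lemma maxNorm_nonneg (M : Matrix (Fin a) (Fin b) ℝ) : 0 ≤ maxNorm M :=
  Real.iSup_nonneg fun _ => abs_nonneg _

lemma maxNorm_le {M : Matrix (Fin a) (Fin b) ℝ} {r : ℝ} (hr : 0 ≤ r)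
    (h : ∀ i j, |M i j| ≤ r) : maxNorm M ≤ r :=
  Real.iSup_le (fun q => h q.1 q.2) hr

lemma maxNorm_sub_le (M N : Matrix (Fin a) (Fin b) ℝ) :
    maxNorm (M - N) ≤ maxNorm M + maxNorm N :=
  maxNorm_le (add_nonneg (maxNorm_nonneg M) (maxNorm_nonneg N)) fun i j =>
    (abs_sub (M i j) (N i j)).trans (add_le_add (abs_le_maxNorm M i j) (abs_le_maxNorm N i j))

lemma sum_abs_le_mul_maxNorm (M : Matrix (Fin a) (Fin b) ℝ) (i : Fin a) :
    ∑ j, |M i j| ≤ b * maxNorm M :=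
  calc ∑ j, |M i j| ≤ ∑ _j : Fin b, maxNorm M :=
        Finset.sum_le_sum fun j _ => abs_le_maxNorm M i j
    _ = b * maxNorm M := by simp

lemma maxNorm_mul_le (M : Matrix (Fin a) (Fin b) ℝ) (N : Matrix (Fin b) (Fin c) ℝ) :
    maxNorm (M * N) ≤ b * maxNorm M * maxNorm N := by
  refine maxNorm_le (by have := maxNorm_nonneg M; have := maxNorm_nonneg N; positivity)
    fun i j => ?_
  calc |(M * N) i j| ≤ ∑ l, |M i l| * |N l j| := by
        simpa only [mul_apply, abs_mul] using
          Finset.abs_sum_le_sum_abs (fun l => M i l * N l j) Finset.univ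
    _ ≤ ∑ l, |M i l| * maxNorm N :=
        Finset.sum_le_sum fun l _ => by gcongr; exact abs_le_maxNorm N l j
    _ ≤ b * maxNorm M * maxNorm N := by
        rw [← Finset.sum_mul]
        gcongr
        · exact maxNorm_nonneg N
        · exact sum_abs_le_mul_maxNorm M i

end MaxNorm

section LinftyOpNorm

attribute [local instance] Matrix.linftyOpNormedAddCommGroup Matrix.linftyOpNormedRing
  Matrix.linftyOpNormedSpace

lemma linfty_opNorm_le_mul_maxNorm {a b : ℕ} (M : Matrix (Fin a) (Fin b) ℝ) :
    ‖M‖ ≤ b * maxNorm M := by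
  have hr : 0 ≤ b * maxNorm M := by have := maxNorm_nonneg M; positivity
  rw [linfty_opNorm_def, ← Real.le_toNNReal_iff_coe_le hr]
  refine Finset.sup_le fun i _ => ?_
  rw [Real.le_toNNReal_iff_coe_le hr, NNReal.coe_sum]
  simpa only [coe_nnnorm, Real.norm_eq_abs] using sum_abs_le_mul_maxNorm M i

lemma isUnit_one_add_of_mul_maxNorm_lt_one {k : ℕ} {Q : Matrix (Fin k) (Fin k) ℝ}
    (h : k * maxNorm Q < 1) : IsUnit (1 + Q) := by
  have : CompleteSpace (Matrix (Fin k) (Fin k) ℝ) := FiniteDimensional.complete ℝ _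
  have hQ : ‖-Q‖ < 1 := by rw [norm_neg]; exact (linfty_opNorm_le_mul_maxNorm Q).trans_lt h
  simpa only [Units.val_oneSub, sub_neg_eq_add] using (Units.oneSub (-Q) hQ).isUnit

end LinftyOpNorm

lemma sub_half_smul_mul_one_add_cayley {m n : Type*} [Fintype n] [DecidableEq n]
    {Q₁ : Matrix n n ℝ} (hQ₁ : IsUnit (1 + Q₁)) (Q₂ : Matrix m n ℝ) :
    Q₂ - (1 / 2 : ℝ) • (Q₂ * (1 + (1 - Q₁) * (1 + Q₁)⁻¹)) = Q₂ * (Q₁ * (1 + Q₁)⁻¹) := by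
  have hinv : (1 + Q₁) * (1 + Q₁)⁻¹ = 1 := mul_nonsing_inv _ (isUnit_iff_isUnit_det _ |>.mp hQ₁)
  have one_add_cayley : 1 + (1 - Q₁) * (1 + Q₁)⁻¹ = (2 : ℝ) • (1 + Q₁)⁻¹ := by
    calc 1 + (1 - Q₁) * (1 + Q₁)⁻¹ = ((1 + Q₁) + (1 - Q₁)) * (1 + Q₁)⁻¹ := by
          rw [Matrix.add_mul, hinv]
      _ = (2 : ℝ) • (1 + Q₁)⁻¹ := by
          rw [add_add_sub_cancel, ← two_smul ℝ, smul_mul_assoc, Matrix.one_mul]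
  have mul_inv_eq : Q₁ * (1 + Q₁)⁻¹ = 1 - (1 + Q₁)⁻¹ := by
    rw [eq_sub_iff_add_eq, ← add_one_mul, add_comm Q₁ 1, hinv]
  rw [one_add_cayley, mul_inv_eq, Matrix.mul_smul, smul_smul, Matrix.mul_sub, Matrix.mul_one]
  norm_num

lemma maxNorm_mul_inv_one_add_le {k : ℕ} {Q : Matrix (Fin k) (Fin k) ℝ}
    (hQ : IsUnit (1 + Q)) (h : k * maxNorm Q < 1) :
    maxNorm (Q * (1 + Q)⁻¹) ≤ maxNorm Q / (1 - k * maxNorm Q) := by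
  set M := Q * (1 + Q)⁻¹
  have hinv : (1 + Q) * (1 + Q)⁻¹ = 1 := mul_nonsing_inv _ (isUnit_iff_isUnit_det _ |>.mp hQ)
  have fixed_point : M = Q - Q * M := by
    rw [eq_sub_iff_add_eq, ← one_add_mul, ← Matrix.mul_assoc,
      ((Commute.one_left Q).add_left (Commute.refl Q)).eq, Matrix.mul_assoc, hinv, Matrix.mul_one]
  have hM : maxNorm M ≤ maxNorm Q + k * maxNorm Q * maxNorm M :=
    calc maxNorm M = maxNorm (Q - Q * M) := by rw [← fixed_point]
      _ ≤ maxNorm Q + maxNorm (Q * M) := maxNorm_sub_le _ _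
      _ ≤ maxNorm Q + k * maxNorm Q * maxNorm M := by gcongr; exact maxNorm_mul_le Q M
  rw [le_div_iff₀ (by linarith)]
  linarith

theorem A_approx_bound_general (p k : ℕ)
    (Q₁ : Matrix (Fin k) (Fin k) ℝ) (Q₂ : Matrix (Fin (p - k)) (Fin k) ℝ)
    (h : (k : ℝ) * maxNorm Q₁ < 1) :
    IsUnit (1 + Q₁) ∧
    maxNorm (Q₂ - (1 / 2 : ℝ) • (Q₂ * (1 + (1 - Q₁) * (1 + Q₁)⁻¹)))
      ≤ (k : ℝ) * maxNorm Q₂ * maxNorm Q₁ / (1 - (k : ℝ) * maxNorm Q₁) ∧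
    maxNorm (Q₂ - (1 / 2 : ℝ) • (Q₂ * (1 + (1 - Q₁) * (1 + Q₁)⁻¹)))
      ≤ (k : ℝ) * max (maxNorm Q₁) (maxNorm Q₂) ^ 2 / (1 - (k : ℝ) * maxNorm Q₁) := by
  have hQ₁ := isUnit_one_add_of_mul_maxNorm_lt_one h
  have bound : maxNorm (Q₂ * (Q₁ * (1 + Q₁)⁻¹))
      ≤ (k : ℝ) * maxNorm Q₂ * maxNorm Q₁ / (1 - (k : ℝ) * maxNorm Q₁) :=
    calc _ ≤ k * maxNorm Q₂ * maxNorm (Q₁ * (1 + Q₁)⁻¹) := maxNorm_mul_le _ _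
      _ ≤ k * maxNorm Q₂ * (maxNorm Q₁ / (1 - k * maxNorm Q₁)) := by
          gcongr
          · have := maxNorm_nonneg Q₂; positivity
          · exact maxNorm_mul_inv_one_add_le hQ₁ h
      _ = _ := by ring
  rw [sub_half_smul_mul_one_add_cayley hQ₁]
  refine ⟨hQ₁, bound, bound.trans ?_⟩
  rw [sq, mul_assoc]
  gcongr k * ?_ / _
  exact mul_le_mul (le_max_right _ _) (le_max_left _ _) (maxNorm_nonneg Q₁)
    ((maxNorm_nonneg Q₁).trans (le_max_left _ _))

/-- Bound on the error of the approximation `Q₂` to `A = ½ Q₂ (I + F)`,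
where `F = (I - Q₁)(I + Q₁)⁻¹`, when `k‖Q₁‖_max < 1`. -/
theorem A_approx_bound (p k : ℕ) (hk : 0 < k) (hkp : k < p)
    (Q₁ : Matrix (Fin k) (Fin k) ℝ) (Q₂ : Matrix (Fin (p - k)) (Fin k) ℝ)
    (h : (k : ℝ) * maxNorm Q₁ < 1) :
    IsUnit (1 + Q₁) ∧
    maxNorm (Q₂ - (1 / 2 : ℝ) • (Q₂ * (1 + (1 - Q₁) * (1 + Q₁)⁻¹)))
      ≤ (k : ℝ) * maxNorm Q₂ * maxNorm Q₁ / (1 - (k : ℝ) * maxNorm Q₁) ∧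
    maxNorm (Q₂ - (1 / 2 : ℝ) • (Q₂ * (1 + (1 - Q₁) * (1 + Q₁)⁻¹)))
      ≤ (k : ℝ) * max (maxNorm Q₁) (maxNorm Q₂) ^ 2 / (1 - (k : ℝ) * maxNorm Q₁) :=
  A_approx_bound_general p k Q₁ Q₂ h

end
end
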